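/- For all integers i, j, k with i − j ≡ 1 (mod 3) and k even, the following identity holds in F: Z(i+1,j,k) · Z(i−1,j+1,k+1) = Z(i,j,k) · Z(i,j+1,k+1) + Z(i,j,k+1) · Z(i,j+1,k). -/
import Mathlib


noncomputable section

open MvPolynomial

/-- The field `F = ℚ(x₁,…,x₆)` of rational functions in six indeterminates over `ℚ`. -/
abbrev F : Type := FractionRing (MvPolynomial (Fin 6) ℚ)

/-- The indeterminate `x_{r+1}` as an element of `F` (so `x 0 = x₁, …, x 5 = x₆`). -/
def x (r : Fin 6) : F := algebraMap (MvPolynomial (Fin 6) ℚ) F (X r)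

/-- `A = (x₃x₅+x₄x₆)/(x₁x₂)` -/
def A : F := (x 2 * x 4 + x 3 * x 5) / (x 0 * x 1)

/-- `B = (x₁x₆+x₂x₅)/(x₃x₄)` -/
def B : F := (x 0 * x 5 + x 1 * x 4) / (x 2 * x 3)

/-- `C = (x₁x₃+x₂x₄)/(x₅x₆)` -/
def C : F := (x 0 * x 2 + x 1 * x 3) / (x 4 * x 5)

/-- `D = (x₁x₃x₆+x₂x₃x₅+x₂x₄x₆)/(x₁x₄x₅)` -/
def D : F := (x 0 * x 2 * x 5 + x 1 * x 2 * x 4 + x 1 * x 3 * x 5) / (x 0 * x 3 * x 4)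

/-- `E = (x₂x₄x₅+x₁x₃x₅+x₁x₄x₆)/(x₂x₃x₆)` -/
def E : F := (x 1 * x 3 * x 4 + x 0 * x 2 * x 4 + x 0 * x 3 * x 5) / (x 1 * x 2 * x 5)

/-- `a(i,j) = i² + ij + j² + 1 + i + 2j` -/
def a (i j : ℤ) : ℤ := i^2 + i*j + j^2 + 1 + i + 2*j

/-- `b(i,j) = i² + ij + j² + 1 + 2i + j` -/
def b (i j : ℤ) : ℤ := i^2 + i*j + j^2 + 1 + 2*i + j

/-- `c(i,j) = i² + ij + j² + 1` -/
def c (i j : ℤ) : ℤ := i^2 + i*j + j^2 + 1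

/-- The initial cluster variable `x_{r(i,j,k)}` determined by `2(i−j)+3k mod 6`:
`r = 1` if `≡ 5`, `r = 2` if `≡ 2`, `r = 3` if `≡ 4`, `r = 4` if `≡ 1`,
`r = 5` if `≡ 3`, and `r = 6` if `≡ 0 (mod 6)`. -/
def xr (i j k : ℤ) : F :=
  if (2*(i-j) + 3*k) % 6 = 5 then x 0
  else if (2*(i-j) + 3*k) % 6 = 2 then x 1
  else if (2*(i-j) + 3*k) % 6 = 4 then x 2
  else if (2*(i-j) + 3*k) % 6 = 1 then x 3
  else if (2*(i-j) + 3*k) % 6 = 3 then x 4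
  else x 5

/-- `Z(i,j,k) = x_{r(i,j,k)} · A^{⌊a(i,j)/3⌋} · B^{⌊b(i,j)/3⌋} · C^{⌊c(i,j)/3⌋} ·
D^{⌊(k−1)²/4⌋} · E^{⌊k²/4⌋}`.  (Note `Int` division by a positive integer is floor
division.) -/
def Z (i j k : ℤ) : F :=
  xr i j k * A ^ (a i j / 3) * B ^ (b i j / 3) * C ^ (c i j / 3)
    * D ^ ((k-1)^2 / 4) * E ^ (k^2 / 4)

lemma nz (p : MvPolynomial (Fin 6) ℚ) (h : eval (fun _ => (1:ℚ)) p ≠ 0) :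
    algebraMap (MvPolynomial (Fin 6) ℚ) F p ≠ 0 := by
  intro h0
  exact h (by rw [(IsFractionRing.to_map_eq_zero_iff (K := F)).mp h0]; simp)

lemma hxne (r : Fin 6) : x r ≠ 0 := by
  rw [x, Ne, IsFractionRing.to_map_eq_zero_iff]
  exact MvPolynomial.X_ne_zero r

lemma hAne : A ≠ 0 := by
  rw [A]
  apply div_ne_zero <;> simp only [x, ← map_mul, ← map_add] <;> exact nz _ (by simp)

lemma hBne : B ≠ 0 := by
  rw [B]
  apply div_ne_zero <;> simp only [x, ← map_mul, ← map_add] <;> exact nz _ (by simp)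

lemma hCne : C ≠ 0 := by
  rw [show _root_.C = (x 0 * x 2 + x 1 * x 3) / (x 4 * x 5) from rfl]
  apply div_ne_zero <;> simp only [x, ← map_mul, ← map_add] <;> exact nz _ (by simp)

lemma hDne : D ≠ 0 := by
  rw [D]
  apply div_ne_zero <;> simp only [x, ← map_mul, ← map_add] <;> exact nz _ (by norm_num)

lemma hEne : E ≠ 0 := by
  rw [E]
  apply div_ne_zero <;> simp only [x, ← map_mul, ← map_add] <;> exact nz _ (by norm_num)

lemma keyB : x 2 * x 3 * B = x 1 * x 4 + x 0 * x 5 := by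
  rw [B]
  field_simp [hxne 2, hxne 3]
  ring

lemma gen {A B C D E y0 y1 y2 y3 y4 y5 : F} (hA : A ≠ 0) (hB : B ≠ 0) (hC : C ≠ 0)
    {pa qa ra sa pb qb rb sb pc qc rc sc u1 u2 v1 v2 : ℤ}
    (ha : pa + qa = ra + sa) (hb : pb + qb = rb + sb + 1) (hc : pc + qc = rc + sc)
    (key : y2 * y3 * B = y1 * y4 + y0 * y5) :
    y2 * A^pa * B^pb * C^pc * D^u1 * E^v1 * (y3 * A^qa * B^qb * C^qc * D^u2 * E^v2)
      = y1 * A^ra * B^rb * C^rc * D^u1 * E^v1 * (y4 * A^sa * B^sb * C^sc * D^u2 * E^v2)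
      + y0 * A^ra * B^rb * C^rc * D^u2 * E^v2 * (y5 * A^sa * B^sb * C^sc * D^u1 * E^v1) := by
  calc y2 * A^pa * B^pb * C^pc * D^u1 * E^v1 * (y3 * A^qa * B^qb * C^qc * D^u2 * E^v2)
      = (y2*y3) * A^(pa+qa) * B^(pb+qb) * C^(pc+qc) * (D^u1*D^u2) * (E^v1*E^v2) := by
        rw [zpow_add₀ hA, zpow_add₀ hB, zpow_add₀ hC]; ring
    _ = (y2*y3*B) * (A^ra*A^sa) * (B^rb*B^sb) * (C^rc*C^sc) * (D^u1*D^u2) * (E^v1*E^v2) := by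
        rw [ha, hb, hc, zpow_add_one₀ hB, zpow_add₀ hA, zpow_add₀ hB, zpow_add₀ hC]; ring
    _ = _ := by rw [key]; ring

/-- For `i − j ≡ 1 (mod 3)` and `k` even:
`Z(i+1,j,k)·Z(i−1,j+1,k+1) = Z(i,j,k)·Z(i,j+1,k+1) + Z(i,j,k+1)·Z(i,j+1,k)`. -/
theorem stmt_13 (i j k : ℤ) (h3 : (i - j) % 3 = 1) (h2 : Even k) :
    Z (i+1) j k * Z (i-1) (j+1) (k+1)
      = Z i j k * Z i (j+1) (k+1) + Z i j (k+1) * Z i (j+1) k := by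

  obtain ⟨n, rfl⟩ : ∃ n, k = 2*n := by obtain ⟨r, hr⟩ := h2; exact ⟨r, by omega⟩
  obtain ⟨m, rfl⟩ : ∃ m, i = 3*m+1+j := ⟨(i-j-1)/3, by omega⟩
  have hx1 : xr (3*m+1+j+1) j (2*n) = x 2 := by
    rw [xr, if_neg (by omega), if_neg (by omega), if_pos (by omega)]
  have hx2 : xr (3*m+1+j-1) (j+1) (2*n+1) = x 3 := by
    rw [xr, if_neg (by omega), if_neg (by omega), if_neg (by omega), if_pos (by omega)]
  have hx3 : xr (3*m+1+j) j (2*n) = x 1 := by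
    rw [xr, if_neg (by omega), if_pos (by omega)]
  have hx4 : xr (3*m+1+j) (j+1) (2*n+1) = x 4 := by
    rw [xr, if_neg (by omega), if_neg (by omega), if_neg (by omega), if_neg (by omega), if_pos (by omega)]
  have hx5 : xr (3*m+1+j) j (2*n+1) = x 0 := by
    rw [xr, if_pos (by omega)]
  have hx6 : xr (3*m+1+j) (j+1) (2*n) = x 5 := by
    rw [xr, if_neg (by omega), if_neg (by omega), if_neg (by omega), if_neg (by omega), if_neg (by omega)]
  have ha : a (3*m+1+j+1) j / 3 + a (3*m+1+j-1) (j+1) / 3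
      = a (3*m+1+j) j / 3 + a (3*m+1+j) (j+1) / 3 := by
    have e1 : a (3*m+1+j+1) j = 9*(m*m) + 9*(m*j) + 3*(j*j) + 15*m + 9*j + 7 := by
      simp only [a]; ring
    have e2 : a (3*m+1+j-1) (j+1) = 9*(m*m) + 9*(m*j) + 3*(j*j) + 6*m + 6*j + 4 := by
      simp only [a]; ring
    have e3 : a (3*m+1+j) j = 9*(m*m) + 9*(m*j) + 3*(j*j) + 9*m + 6*j + 3 := by
      simp only [a]; ring
    have e4 : a (3*m+1+j) (j+1) = 9*(m*m) + 9*(m*j) + 3*(j*j) + 12*m + 9*j + 7 := by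
      simp only [a]; ring
    rw [e1, e2, e3, e4]
    generalize m*m = u; generalize m*j = v; generalize j*j = w
    omega
  have hb : b (3*m+1+j+1) j / 3 + b (3*m+1+j-1) (j+1) / 3
      = b (3*m+1+j) j / 3 + b (3*m+1+j) (j+1) / 3 + 1 := by
    have e1 : b (3*m+1+j+1) j = 9*(m*m) + 9*(m*j) + 3*(j*j) + 18*m + 9*j + 9 := by
      simp only [b]; ring
    have e2 : b (3*m+1+j-1) (j+1) = 9*(m*m) + 9*(m*j) + 3*(j*j) + 9*m + 6*j + 3 := by
      simp only [b]; ring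
    have e3 : b (3*m+1+j) j = 9*(m*m) + 9*(m*j) + 3*(j*j) + 12*m + 6*j + 4 := by
      simp only [b]; ring
    have e4 : b (3*m+1+j) (j+1) = 9*(m*m) + 9*(m*j) + 3*(j*j) + 15*m + 9*j + 7 := by
      simp only [b]; ring
    rw [e1, e2, e3, e4]
    generalize m*m = u; generalize m*j = v; generalize j*j = w
    omega
  have hc : c (3*m+1+j+1) j / 3 + c (3*m+1+j-1) (j+1) / 3
      = c (3*m+1+j) j / 3 + c (3*m+1+j) (j+1) / 3 := by
    have e1 : c (3*m+1+j+1) j = 9*(m*m) + 9*(m*j) + 3*(j*j) + 12*m + 6*j + 5 := by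
      simp only [c]; ring
    have e2 : c (3*m+1+j-1) (j+1) = 9*(m*m) + 9*(m*j) + 3*(j*j) + 3*m + 3*j + 2 := by
      simp only [c]; ring
    have e3 : c (3*m+1+j) j = 9*(m*m) + 9*(m*j) + 3*(j*j) + 6*m + 3*j + 2 := by
      simp only [c]; ring
    have e4 : c (3*m+1+j) (j+1) = 9*(m*m) + 9*(m*j) + 3*(j*j) + 9*m + 6*j + 4 := by
      simp only [c]; ring
    rw [e1, e2, e3, e4]
    generalize m*m = u; generalize m*j = v; generalize j*j = w
    omega
  simp only [Z, hx1, hx2, hx3, hx4, hx5, hx6]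
  rw [show (2*n+1-1 : ℤ) = 2*n from by ring]
  exact gen hAne hBne hCne ha hb hc keyB
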